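/- arXiv:2509.26035 — 4 statements merged into one kernel-verified Lean document; each statement's English description precedes it below -/
import Mathlib

section
/- Let f : ℝ² → ℝ be smooth and fix x′ ∈ ℝ^d. Then for all x ∈ ℝ^d, the d'Alembertian in x of the composite function x ↦ f(σ(x,x′), σ_−(x,x′)) equals d·∂₁f + 2σ·∂₁²f + 2(σ^μ(σ_−)_μ)·∂₁∂₂f + d·∂₂f + 2σ_−·∂₂²f, all partial derivatives of f being evaluated at (σ(x,x′), σ_−(x,x′)), where σ^μ(σ_−)_μ = (t−t′)² − Σ_{i=1}^{d-2}(x_i−x_i′)² − (z² − z′²). -/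
noncomputable section

/-- The coordinate space ℝ^d = ℝ_t × ℝ^{d-2} × ℝ_z with d = n + 2. -/
abbrev Pt (n : ℕ) := ℝ × (Fin n → ℝ) × ℝ

/-- Partial derivative in the time coordinate `t`. -/
noncomputable def pdt {n : ℕ} (f : Pt n → ℝ) (x : Pt n) : ℝ :=
  deriv (fun s => f (s, x.2.1, x.2.2)) x.1

/-- Partial derivative in the transverse coordinate `x_i`. -/
noncomputable def pdx {n : ℕ} (i : Fin n) (f : Pt n → ℝ) (x : Pt n) : ℝ :=
  deriv (fun s => f (x.1, Function.update x.2.1 i s, x.2.2)) (x.2.1 i)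

/-- Partial derivative in the normal coordinate `z`. -/
noncomputable def pdz {n : ℕ} (f : Pt n → ℝ) (x : Pt n) : ℝ :=
  deriv (fun s => f (x.1, x.2.1, s)) x.2.2

/-- The d'Alembert operator □ = ∂_t² − Σ_i ∂_{x_i}² − ∂_z² (signature (+,−,…,−)). -/
noncomputable def box {n : ℕ} (f : Pt n → ℝ) (x : Pt n) : ℝ :=
  pdt (pdt f) x - (∑ i : Fin n, pdx i (pdx i f) x) - pdz (pdz f) x

/-- The Synge world function σ(x,x′), as a function of x for fixed x′. -/
noncomputable def synge {n : ℕ} (x' : Pt n) (x : Pt n) : ℝ :=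
  (1/2) * ((x.1 - x'.1)^2 - (∑ i : Fin n, (x.2.1 i - x'.2.1 i)^2) - (x.2.2 - x'.2.2)^2)

/-- The reflected Synge world function σ₋(x,x′), as a function of x for fixed x′. -/
noncomputable def syngeR {n : ℕ} (x' : Pt n) (x : Pt n) : ℝ :=
  (1/2) * ((x.1 - x'.1)^2 - (∑ i : Fin n, (x.2.1 i - x'.2.1 i)^2) - (x.2.2 + x'.2.2)^2)

/-- Partial derivative of f : ℝ² → ℝ in the first slot. -/
noncomputable def p1 (f : ℝ × ℝ → ℝ) (q : ℝ × ℝ) : ℝ := deriv (fun s => f (s, q.2)) q.1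

/-- Partial derivative of f : ℝ² → ℝ in the second slot. -/
noncomputable def p2 (f : ℝ × ℝ → ℝ) (q : ℝ × ℝ) : ℝ := deriv (fun s => f (q.1, s)) q.2

lemma p1_eq_fderiv {f : ℝ × ℝ → ℝ} {q : ℝ × ℝ} (hf : DifferentiableAt ℝ f q) :
    p1 f q = fderiv ℝ f q (1, 0) := by
  have hcurve : HasDerivAt (fun s : ℝ => (s, q.2)) ((1 : ℝ), (0 : ℝ)) q.1 :=
    HasDerivAt.prodMk (hasDerivAt_id q.1) (hasDerivAt_const q.1 q.2)
  exact (hf.hasFDerivAt.comp_hasDerivAt q.1 hcurve).deriv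

lemma p2_eq_fderiv {f : ℝ × ℝ → ℝ} {q : ℝ × ℝ} (hf : DifferentiableAt ℝ f q) :
    p2 f q = fderiv ℝ f q (0, 1) := by
  have hcurve : HasDerivAt (fun s : ℝ => (q.1, s)) ((0 : ℝ), (1 : ℝ)) q.2 :=
    HasDerivAt.prodMk (hasDerivAt_const q.2 q.1) (hasDerivAt_id q.2)
  exact (hf.hasFDerivAt.comp_hasDerivAt q.2 hcurve).deriv

lemma hasDerivAt_comp2 {f : ℝ × ℝ → ℝ} (hf : ContDiff ℝ (⊤ : ℕ∞) f) {u v : ℝ → ℝ} {u' v' s : ℝ}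
    (hu : HasDerivAt u u' s) (hv : HasDerivAt v v' s) :
    HasDerivAt (fun r => f (u r, v r))
      (u' * p1 f (u s, v s) + v' * p2 f (u s, v s)) s := by
  have hd : DifferentiableAt ℝ f (u s, v s) := hf.differentiable (by simp) _
  have hcurve : HasDerivAt (fun r => (u r, v r)) (u', v') s := hu.prodMk hv
  have h := hd.hasFDerivAt.comp_hasDerivAt s hcurve
  have hval : fderiv ℝ f (u s, v s) (u', v')
      = u' * p1 f (u s, v s) + v' * p2 f (u s, v s) := by
    have : (u', v') = u' • ((1 : ℝ), (0 : ℝ)) + v' • ((0 : ℝ), (1 : ℝ)) := by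
      simp [Prod.ext_iff]
    rw [this, map_add, map_smul, map_smul, p1_eq_fderiv hd, p2_eq_fderiv hd]
    simp [smul_eq_mul]
  rw [← hval]; exact h

lemma p1_eq_fderiv' {f : ℝ × ℝ → ℝ} (hf : ContDiff ℝ (⊤ : ℕ∞) f) :
    p1 f = fun q => fderiv ℝ f q (1, 0) := by
  funext q; exact p1_eq_fderiv (hf.differentiable (by simp) q)

lemma p2_eq_fderiv' {f : ℝ × ℝ → ℝ} (hf : ContDiff ℝ (⊤ : ℕ∞) f) :
    p2 f = fun q => fderiv ℝ f q (0, 1) := by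
  funext q; exact p2_eq_fderiv (hf.differentiable (by simp) q)

lemma contDiff_fderiv_apply {f : ℝ × ℝ → ℝ} (hf : ContDiff ℝ (⊤ : ℕ∞) f) (v : ℝ × ℝ) :
    ContDiff ℝ (⊤ : ℕ∞) (fun q => fderiv ℝ f q v) := by
  have h1 : ContDiff ℝ (⊤ : ℕ∞) (fderiv ℝ f) := hf.fderiv_right (by simp)
  exact (ContinuousLinearMap.apply ℝ ℝ v).contDiff.comp h1

lemma contDiff_p1 {f : ℝ × ℝ → ℝ} (hf : ContDiff ℝ (⊤ : ℕ∞) f) : ContDiff ℝ (⊤ : ℕ∞) (p1 f) := by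
  rw [p1_eq_fderiv' hf]; exact contDiff_fderiv_apply hf _

lemma contDiff_p2 {f : ℝ × ℝ → ℝ} (hf : ContDiff ℝ (⊤ : ℕ∞) f) : ContDiff ℝ (⊤ : ℕ∞) (p2 f) := by
  rw [p2_eq_fderiv' hf]; exact contDiff_fderiv_apply hf _

lemma p_symm {f : ℝ × ℝ → ℝ} (hf : ContDiff ℝ (⊤ : ℕ∞) f) (q : ℝ × ℝ) :
    p2 (p1 f) q = p1 (p2 f) q := by
  have h1 : ContDiff ℝ (⊤ : ℕ∞) (fderiv ℝ f) := hf.fderiv_right (by simp)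
  have hsym := second_derivative_symmetric (f := f) (f' := fderiv ℝ f)
    (f'' := fderiv ℝ (fderiv ℝ f) q) (x := q)
    (fun y => (hf.differentiable (by simp) y).hasFDerivAt)
    ((h1.differentiable (by simp) q).hasFDerivAt)
  have e1 : ∀ v w : ℝ × ℝ, fderiv ℝ (fun y => fderiv ℝ f y w) q v
      = fderiv ℝ (fderiv ℝ f) q v w := by
    intro v w
    have : (fun y => fderiv ℝ f y w) = (ContinuousLinearMap.apply ℝ ℝ w) ∘ (fderiv ℝ f) := rfl
    rw [this, fderiv_comp q ((ContinuousLinearMap.apply ℝ ℝ w).differentiable _)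
      (h1.differentiable (by simp) q)]
    simp
  rw [p2_eq_fderiv (f := p1 f) ((contDiff_p1 hf).differentiable (by simp) q),
      p1_eq_fderiv (f := p2 f) ((contDiff_p2 hf).differentiable (by simp) q),
      p1_eq_fderiv' hf, p2_eq_fderiv' hf, e1, e1, hsym]

/-- Second derivative along a line on which both arguments are quadratic. -/
lemma deriv_deriv_quad (f : ℝ × ℝ → ℝ) (hf : ContDiff ℝ (⊤ : ℕ∞) f) (e e' a b c c' s : ℝ) :
    deriv (deriv (fun r : ℝ => f (c + e * (r - a) ^ 2 / 2, c' + e' * (r - b) ^ 2 / 2))) s =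
      e * p1 f (c + e * (s - a) ^ 2 / 2, c' + e' * (s - b) ^ 2 / 2)
      + e' * p2 f (c + e * (s - a) ^ 2 / 2, c' + e' * (s - b) ^ 2 / 2)
      + (e * (s - a)) * (e * (s - a)) * p1 (p1 f) (c + e * (s - a) ^ 2 / 2, c' + e' * (s - b) ^ 2 / 2)
      + 2 * ((e * (s - a)) * (e' * (s - b))) * p1 (p2 f) (c + e * (s - a) ^ 2 / 2, c' + e' * (s - b) ^ 2 / 2)
      + (e' * (s - b)) * (e' * (s - b)) * p2 (p2 f) (c + e * (s - a) ^ 2 / 2, c' + e' * (s - b) ^ 2 / 2) := by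
  set u : ℝ → ℝ := fun r => c + e * (r - a) ^ 2 / 2 with hu_def
  set v : ℝ → ℝ := fun r => c' + e' * (r - b) ^ 2 / 2 with hv_def
  have hu : ∀ r : ℝ, HasDerivAt u (e * (r - a)) r := by
    intro r
    have h := ((((hasDerivAt_id r).sub_const a).pow 2).const_mul e).div_const 2
    have h2 := h.const_add c
    refine h2.congr_deriv ?_; simp; ring
  have hv : ∀ r : ℝ, HasDerivAt v (e' * (r - b)) r := by
    intro r
    have h := ((((hasDerivAt_id r).sub_const b).pow 2).const_mul e').div_const 2
    have h2 := h.const_add c'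
    refine h2.congr_deriv ?_; simp; ring
  have hstep : deriv (fun r : ℝ => f (u r, v r))
      = fun r => (e * (r - a)) * p1 f (u r, v r) + (e' * (r - b)) * p2 f (u r, v r) := by
    funext r
    exact (hasDerivAt_comp2 hf (hu r) (hv r)).deriv
  rw [hstep]
  have h1 : HasDerivAt (fun r => (e * (r - a)) * p1 f (u r, v r))
      (e * p1 f (u s, v s) + (e * (s - a)) *
        ((e * (s - a)) * p1 (p1 f) (u s, v s) + (e' * (s - b)) * p2 (p1 f) (u s, v s))) s := by
    have ha : HasDerivAt (fun r : ℝ => e * (r - a)) e s := by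
      simpa using ((hasDerivAt_id s).sub_const a).const_mul e
    exact ha.mul (hasDerivAt_comp2 (contDiff_p1 hf) (hu s) (hv s))
  have h2 : HasDerivAt (fun r => (e' * (r - b)) * p2 f (u r, v r))
      (e' * p2 f (u s, v s) + (e' * (s - b)) *
        ((e * (s - a)) * p1 (p2 f) (u s, v s) + (e' * (s - b)) * p2 (p2 f) (u s, v s))) s := by
    have hb : HasDerivAt (fun r : ℝ => e' * (r - b)) e' s := by
      simpa using ((hasDerivAt_id s).sub_const b).const_mul e'
    exact hb.mul (hasDerivAt_comp2 (contDiff_p2 hf) (hu s) (hv s))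
  rw [(h1.fun_add h2).deriv, p_symm hf]
  ring


/-- For smooth f : ℝ² → ℝ and fixed x′, the d'Alembertian of x ↦ f(σ(x,x′), σ₋(x,x′)) equals
d·∂₁f + 2σ·∂₁²f + 2(σ^μ(σ₋)_μ)·∂₁∂₂f + d·∂₂f + 2σ₋·∂₂²f, the derivatives of f being
evaluated at (σ, σ₋), with σ^μ(σ₋)_μ = (t−t′)² − Σ_i (x_i−x_i′)² − (z² − z′²). -/
theorem box_of_function_of_synge (n : ℕ) (f : ℝ × ℝ → ℝ) (hf : ContDiff ℝ (⊤ : ℕ∞) f)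
    (x' x : Pt n) :
    box (fun y => f (synge x' y, syngeR x' y)) x =
      ((n : ℝ) + 2) * p1 f (synge x' x, syngeR x' x)
      + 2 * synge x' x * p1 (p1 f) (synge x' x, syngeR x' x)
      + 2 * ((x.1 - x'.1)^2 - (∑ i : Fin n, (x.2.1 i - x'.2.1 i)^2) - (x.2.2^2 - x'.2.2^2))
          * p1 (p2 f) (synge x' x, syngeR x' x)
      + ((n : ℝ) + 2) * p2 f (synge x' x, syngeR x' x)
      + 2 * syngeR x' x * p2 (p2 f) (synge x' x, syngeR x' x) := by
  set F : Pt n → ℝ := fun y => f (synge x' y, syngeR x' y) with hF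
  set q : ℝ × ℝ := (synge x' x, syngeR x' x) with hq
  set S : ℝ := ∑ i : Fin n, (x.2.1 i - x'.2.1 i)^2 with hS
  -- time direction
  have hT : pdt (pdt F) x =
      p1 f q + p2 f q + (x.1 - x'.1)^2 * p1 (p1 f) q
      + 2 * (x.1 - x'.1)^2 * p1 (p2 f) q + (x.1 - x'.1)^2 * p2 (p2 f) q := by
    have hline : (fun r : ℝ => F (r, x.2.1, x.2.2))
        = fun r => f ((1/2)*(-S - (x.2.2 - x'.2.2)^2) + 1 * (r - x'.1)^2/2,
                      (1/2)*(-S - (x.2.2 + x'.2.2)^2) + 1 * (r - x'.1)^2/2) := by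
      funext r
      simp only [hF, synge, syngeR, hS]
      congr 1
      simp only [Prod.mk.injEq]
      constructor <;> ring
    have hpt : ((1/2)*(-S - (x.2.2 - x'.2.2)^2) + 1 * (x.1 - x'.1)^2/2,
                (1/2)*(-S - (x.2.2 + x'.2.2)^2) + 1 * (x.1 - x'.1)^2/2) = q := by
      simp only [hq, synge, syngeR, hS, Prod.mk.injEq]
      constructor <;> ring
    show deriv (deriv (fun r : ℝ => F (r, x.2.1, x.2.2))) x.1 = _
    rw [hline, deriv_deriv_quad f hf, hpt]
    ring
  -- z direction
  have hZ : pdz (pdz F) x =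
      -p1 f q - p2 f q + (x.2.2 - x'.2.2)^2 * p1 (p1 f) q
      + 2 * ((x.2.2 - x'.2.2) * (x.2.2 + x'.2.2)) * p1 (p2 f) q
      + (x.2.2 + x'.2.2)^2 * p2 (p2 f) q := by
    have hline : (fun r : ℝ => F (x.1, x.2.1, r))
        = fun r => f ((1/2)*((x.1 - x'.1)^2 - S) + (-1) * (r - x'.2.2)^2/2,
                      (1/2)*((x.1 - x'.1)^2 - S) + (-1) * (r - (-x'.2.2))^2/2) := by
      funext r
      simp only [hF, synge, syngeR, hS]
      congr 1
      simp only [Prod.mk.injEq]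
      constructor <;> ring
    have hpt : ((1/2)*((x.1 - x'.1)^2 - S) + (-1) * (x.2.2 - x'.2.2)^2/2,
                (1/2)*((x.1 - x'.1)^2 - S) + (-1) * (x.2.2 - (-x'.2.2))^2/2) = q := by
      simp only [hq, synge, syngeR, hS, Prod.mk.injEq]
      constructor <;> ring
    show deriv (deriv (fun r : ℝ => F (x.1, x.2.1, r))) x.2.2 = _
    rw [hline, deriv_deriv_quad f hf, hpt]
    ring
  -- transverse directions
  have hX : ∀ i : Fin n, pdx i (pdx i F) x =
      (-p1 f q - p2 f q) + (x.2.1 i - x'.2.1 i)^2 *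
        (p1 (p1 f) q + 2 * p1 (p2 f) q + p2 (p2 f) q) := by
    intro i
    set Si : ℝ := ∑ j ∈ Finset.univ.erase i, (x.2.1 j - x'.2.1 j)^2 with hSi_def
    have hSi : (x.2.1 i - x'.2.1 i)^2 + Si = S := by
      rw [hSi_def, hS]
      exact Finset.add_sum_erase Finset.univ (fun j => (x.2.1 j - x'.2.1 j)^2) (Finset.mem_univ i)
    have hsum : ∀ r : ℝ, (∑ j : Fin n, (Function.update x.2.1 i r j - x'.2.1 j)^2)
        = (r - x'.2.1 i)^2 + Si := by
      intro r
      rw [hSi_def]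
      rw [← Finset.add_sum_erase Finset.univ (fun j => (Function.update x.2.1 i r j - x'.2.1 j)^2) (Finset.mem_univ i)]
      congr 1
      · simp
      · exact Finset.sum_congr rfl fun j hj => by
          rw [Function.update_of_ne (Finset.ne_of_mem_erase hj)]
    have hred : pdx i (pdx i F) x
        = deriv (deriv (fun r : ℝ => F (x.1, Function.update x.2.1 i r, x.2.2))) (x.2.1 i) := by
      show deriv (fun s => pdx i F (x.1, Function.update x.2.1 i s, x.2.2)) (x.2.1 i) = _
      congr 1
      funext s
      show deriv (fun r => F (x.1, Function.update (Function.update x.2.1 i s) i r, x.2.2))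
        ((Function.update x.2.1 i s) i) = _
      simp only [Function.update_idem, Function.update_self]
    have hline : (fun r : ℝ => F (x.1, Function.update x.2.1 i r, x.2.2))
        = fun r => f ((1/2)*((x.1 - x'.1)^2 - Si - (x.2.2 - x'.2.2)^2) + (-1) * (r - x'.2.1 i)^2/2,
                      (1/2)*((x.1 - x'.1)^2 - Si - (x.2.2 + x'.2.2)^2) + (-1) * (r - x'.2.1 i)^2/2) := by
      funext r
      simp only [hF, synge, syngeR, hsum r]
      congr 1
      simp only [Prod.mk.injEq]
      constructor <;> ring
    have hpt : ((1/2)*((x.1 - x'.1)^2 - Si - (x.2.2 - x'.2.2)^2) + (-1) * (x.2.1 i - x'.2.1 i)^2/2,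
                (1/2)*((x.1 - x'.1)^2 - Si - (x.2.2 + x'.2.2)^2) + (-1) * (x.2.1 i - x'.2.1 i)^2/2) = q := by
      simp only [hq, synge, syngeR, Prod.mk.injEq]
      rw [(hSi.trans hS).symm]
      constructor <;> ring
    rw [hred, hline, deriv_deriv_quad f hf, hpt]
    ring
  have hXsum : (∑ i : Fin n, pdx i (pdx i F) x)
      = (n : ℝ) * (-p1 f q - p2 f q) + S *
        (p1 (p1 f) q + 2 * p1 (p2 f) q + p2 (p2 f) q) := by
    rw [Finset.sum_congr rfl fun i _ => hX i, Finset.sum_add_distrib, Finset.sum_const,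
      ← Finset.sum_mul, Finset.card_univ, Fintype.card_fin, nsmul_eq_mul, ← hS]
  show pdt (pdt F) x - (∑ i : Fin n, pdx i (pdx i F) x) - pdz (pdz F) x = _
  rw [hT, hXsum, hZ]
  simp only [hq, synge, syngeR, hS]
  ring


end
end

section
/- Fix x′ ∈ ℝ^d and let u be a smooth real function on an open set U ⊆ ℝ^d. For every integer j and every x ∈ U with σ_−(x,x′) ≠ 0, □(u·σ_−^j) = (□u)·σ_−^j + 2j·(σ_−^μ∂_μu)·σ_−^{j−1} + j(d + 2j − 2)·u·σ_−^{j−1}, where σ_−^j denotes the j-th integer power of σ_−(x,x′) and all derivatives are in x. (This is the reflected transport identity underlying the Robin–Hadamard recursion relations.) -/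
noncomputable section

/-- The Minkowskian contraction of gradients:
    f^μ∂_μ g = ∂_t f ∂_t g − Σ_i ∂_{x_i} f ∂_{x_i} g − ∂_z f ∂_z g. -/
noncomputable def contr {n : ℕ} (f g : Pt n → ℝ) (x : Pt n) : ℝ :=
  pdt f x * pdt g x - (∑ i : Fin n, pdx i f x * pdx i g x) - pdz f x * pdz g x

/-! ### helper lemmas -/


lemma gderiv (ε b c s : ℝ) :
    HasDerivAt (fun s : ℝ => c + ε * ((1/2) * (s - b)^2)) (ε * (s - b)) s := by
  have h1 : HasDerivAt (fun s : ℝ => s - b) 1 s := (hasDerivAt_id s).sub_const b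
  have h2 := (h1.fun_pow 2).const_mul ((1:ℝ)/2)
  have h3 := (h2.const_mul ε).const_add c
  refine h3.congr_deriv ?_
  ring

lemma zpow_deriv {g : ℝ → ℝ} {g' : ℝ} {s : ℝ} (hg : HasDerivAt g g' s) (j : ℤ)
    (h0 : g s ≠ 0) :
    HasDerivAt (fun s => g s ^ j) ((j : ℝ) * g s ^ (j - 1) * g') s :=
  (hasDerivAt_zpow j (g s) (Or.inl h0)).comp s hg

/-- Key one-dimensional computation. -/
lemma key1d (j : ℤ) (ε b c : ℝ) (h : ℝ → ℝ) (s0 : ℝ)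
    (hh : ContDiffAt ℝ 2 h s0)
    (hg : c + ε * ((1/2) * (s0 - b)^2) ≠ 0) :
    deriv (deriv (fun s => h s * (c + ε * ((1/2) * (s - b)^2)) ^ j)) s0 =
      deriv (deriv h) s0 * (c + ε * ((1/2) * (s0 - b)^2)) ^ j
      + 2 * (j:ℝ) * deriv h s0 * (ε * (s0 - b)) * (c + ε * ((1/2) * (s0 - b)^2)) ^ (j-1)
      + (j:ℝ) * ((j:ℝ) - 1) * h s0 * (ε * (s0 - b))^2 * (c + ε * ((1/2) * (s0 - b)^2)) ^ (j-2)
      + (j:ℝ) * ε * h s0 * (c + ε * ((1/2) * (s0 - b)^2)) ^ (j-1) := by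
  set g : ℝ → ℝ := fun s => c + ε * ((1/2) * (s - b)^2) with hgdef
  have hgd : ∀ s, HasDerivAt g (ε * (s - b)) s := fun s => gderiv ε b c s
  have hgc : Continuous g := by fun_prop
  have hne : ∀ᶠ s in nhds s0, g s ≠ 0 := hgc.continuousAt.eventually_ne hg
  have hhe : ∀ᶠ s in nhds s0, ContDiffAt ℝ 2 h s := hh.eventually (by simp)
  have hD : (deriv (fun s => h s * g s ^ j)) =ᶠ[nhds s0]
      (fun s => deriv h s * g s ^ j + h s * ((j:ℝ) * g s ^ (j-1) * (ε * (s - b)))) := by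
    filter_upwards [hne, hhe] with s hs hhs
    have hd : HasDerivAt h (deriv h s) s :=
      (hhs.differentiableAt (by norm_num)).hasDerivAt
    exact (hd.mul (zpow_deriv (hgd s) j hs)).deriv
  rw [hD.deriv_eq]
  have hdh : HasDerivAt (deriv h) (deriv (deriv h) s0) s0 := by
    obtain ⟨v, hv, hcd⟩ := hh.contDiffOn (le_refl 2) (by simp)
    obtain ⟨t, hts, hto, hxt⟩ := mem_nhds_iff.mp hv
    have h1 : ContDiffOn ℝ 1 (deriv h) t :=
      (hcd.mono hts).deriv_of_isOpen hto (by norm_num)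
    exact ((h1.differentiableOn (by norm_num)).differentiableAt
      (hto.mem_nhds hxt)).hasDerivAt
  have hds : HasDerivAt h (deriv h s0) s0 :=
    (hh.differentiableAt (by norm_num)).hasDerivAt
  have T1 : HasDerivAt (fun s => deriv h s * g s ^ j)
      (deriv (deriv h) s0 * g s0 ^ j + deriv h s0 * ((j:ℝ) * g s0 ^ (j-1) * (ε*(s0-b)))) s0 :=
    hdh.mul (zpow_deriv (hgd s0) j hg)
  have hgj1 : HasDerivAt (fun s => g s ^ (j-1)) (((j:ℝ)-1) * g s0 ^ (j-2) * (ε*(s0-b))) s0 := by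
    have h2 := zpow_deriv (hgd s0) (j-1) hg
    have e : j - 1 - 1 = j - 2 := by ring
    rw [e] at h2
    convert h2 using 2
    push_cast
    ring
  have T2 : HasDerivAt (fun s => h s * ((j:ℝ) * g s ^ (j-1) * (ε * (s - b))))
      (deriv h s0 * ((j:ℝ) * g s0 ^ (j-1) * (ε * (s0 - b)))
        + h s0 * (((j:ℝ) * (((j:ℝ)-1) * g s0 ^ (j-2) * (ε*(s0-b)))) * (ε * (s0 - b))
          + ((j:ℝ) * g s0 ^ (j-1)) * ε)) s0 := by
    have hlin : HasDerivAt (fun s : ℝ => ε * (s - b)) ε s0 := by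
      simpa using ((hasDerivAt_id s0).sub_const b).const_mul ε
    exact hds.mul (((hgj1.const_mul (j:ℝ)).mul hlin))
  have h3 := (T1.fun_add T2).deriv
  rw [h3]
  ring

lemma pdt_pdt {n : ℕ} (f : Pt n → ℝ) (x : Pt n) :
    pdt (pdt f) x = deriv (deriv (fun s => f (s, x.2.1, x.2.2))) x.1 := rfl

lemma pdz_pdz {n : ℕ} (f : Pt n → ℝ) (x : Pt n) :
    pdz (pdz f) x = deriv (deriv (fun s => f (x.1, x.2.1, s))) x.2.2 := rfl

lemma pdx_pdx {n : ℕ} (i : Fin n) (f : Pt n → ℝ) (x : Pt n) :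
    pdx i (pdx i f) x
      = deriv (deriv (fun s => f (x.1, Function.update x.2.1 i s, x.2.2))) (x.2.1 i) := by
  unfold pdx
  congr 1
  funext s
  simp [Function.update_idem]


/-- Reflected transport identity underlying the Robin–Hadamard recursion relations:
for u smooth on an open U ⊆ ℝ^d, j ∈ ℤ and x ∈ U with σ₋(x,x′) ≠ 0,
□(u·σ₋^j) = (□u)·σ₋^j + 2j·(σ₋^μ∂_μu)·σ₋^{j−1} + j(d+2j−2)·u·σ₋^{j−1}  (d = n + 2). -/
theorem box_u_sigmaR_pow (n : ℕ) (x' : Pt n) (U : Set (Pt n)) (hU : IsOpen U)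
    (u : Pt n → ℝ) (hu : ContDiffOn ℝ (⊤ : ℕ∞) u U) (j : ℤ) (x : Pt n) (hx : x ∈ U)
    (hσ : syngeR x' x ≠ 0) :
    box (fun y => u y * syngeR x' y ^ j) x =
      box u x * syngeR x' x ^ j
      + 2 * (j : ℝ) * contr (syngeR x') u x * syngeR x' x ^ (j - 1)
      + (j : ℝ) * (((n : ℝ) + 2) + 2 * (j : ℝ) - 2) * u x * syngeR x' x ^ (j - 1) := by
  have hxc : ContDiffAt ℝ 2 u x := (hu.contDiffAt (hU.mem_nhds hx)).of_le (by exact WithTop.coe_le_coe.mpr le_top)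
  -- smoothness of slices
  have hht : ContDiffAt ℝ 2 (fun s => u (s, x.2.1, x.2.2)) x.1 := by
    have hm : ContDiff ℝ 2 (fun s : ℝ => ((s, x.2.1, x.2.2) : Pt n)) :=
      contDiff_id.prodMk contDiff_const
    exact hxc.comp x.1 hm.contDiffAt
  have hhz : ContDiffAt ℝ 2 (fun s => u (x.1, x.2.1, s)) x.2.2 := by
    have hm : ContDiff ℝ 2 (fun s : ℝ => ((x.1, x.2.1, s) : Pt n)) :=
      contDiff_const.prodMk (contDiff_const.prodMk contDiff_id)
    exact hxc.comp x.2.2 hm.contDiffAt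
  have hhx : ∀ i : Fin n,
      ContDiffAt ℝ 2 (fun s => u (x.1, Function.update x.2.1 i s, x.2.2)) (x.2.1 i) := by
    intro i
    have hupd : ContDiff ℝ 2 (fun s : ℝ => Function.update x.2.1 i s) := by
      rw [contDiff_pi]
      intro k
      by_cases hk : k = i
      · subst hk; simpa using contDiff_fun_id
      · simpa [Function.update_of_ne hk] using (contDiff_const : ContDiff ℝ 2 fun _ : ℝ => x.2.1 k)
    have hm : ContDiff ℝ 2 (fun s : ℝ => ((x.1, Function.update x.2.1 i s, x.2.2) : Pt n)) :=
      contDiff_const.prodMk (hupd.prodMk contDiff_const)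
    have hx2 : ContDiffAt ℝ 2 u ((x.1, Function.update x.2.1 i (x.2.1 i), x.2.2) : Pt n) := by
      rw [Function.update_eq_self]
      exact hxc
    exact hx2.comp (x.2.1 i) hm.contDiffAt
  -- slice identities for σ₋
  have slice_t : ∀ s, syngeR x' (s, x.2.1, x.2.2)
      = (syngeR x' x - (1/2)*(x.1 - x'.1)^2) + 1 * ((1/2) * (s - x'.1)^2) := by
    intro s; simp only [syngeR]; ring
  have slice_z : ∀ s, syngeR x' (x.1, x.2.1, s)
      = (syngeR x' x + (1/2)*(x.2.2 + x'.2.2)^2) + (-1) * ((1/2) * (s - (-x'.2.2))^2) := by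
    intro s; simp only [syngeR]; ring
  have slice_i : ∀ (i : Fin n) s, syngeR x' (x.1, Function.update x.2.1 i s, x.2.2)
      = (syngeR x' x + (1/2)*(x.2.1 i - x'.2.1 i)^2) + (-1) * ((1/2) * (s - x'.2.1 i)^2) := by
    intro i s
    have h1 : (fun k => (Function.update x.2.1 i s k - x'.2.1 k)^2)
        = Function.update (fun k => (x.2.1 k - x'.2.1 k)^2) i ((s - x'.2.1 i)^2) := by
      funext k
      by_cases hk : k = i
      · subst hk; simp
      · simp [Function.update_of_ne hk]
    have hsum : ∑ k, (Function.update x.2.1 i s k - x'.2.1 k)^2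
        = (s - x'.2.1 i)^2 + ((∑ k, (x.2.1 k - x'.2.1 k)^2) - (x.2.1 i - x'.2.1 i)^2) := by
      rw [h1, Finset.sum_update_of_mem (Finset.mem_univ i),
        Finset.sum_eq_sum_sdiff_singleton_add (Finset.mem_univ i)
          (fun k => (x.2.1 k - x'.2.1 k)^2)]
      ring
    simp only [syngeR]
    rw [hsum]
    ring
  -- base values at the point
  have hgt : (syngeR x' x - (1/2)*(x.1 - x'.1)^2) + 1 * ((1/2) * (x.1 - x'.1)^2)
      = syngeR x' x := by ring
  have hgz : (syngeR x' x + (1/2)*(x.2.2 + x'.2.2)^2)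
      + (-1) * ((1/2) * (x.2.2 - (-x'.2.2))^2) = syngeR x' x := by ring
  have hgi : ∀ i : Fin n, (syngeR x' x + (1/2)*(x.2.1 i - x'.2.1 i)^2)
      + (-1) * ((1/2) * (x.2.1 i - x'.2.1 i)^2) = syngeR x' x := by intro i; ring
  -- first derivatives of σ₋
  have pdtσ : pdt (syngeR x') x = x.1 - x'.1 := by
    show deriv (fun s => syngeR x' (s, x.2.1, x.2.2)) x.1 = _
    rw [funext slice_t, (gderiv 1 x'.1 _ x.1).deriv]
    ring
  have pdzσ : pdz (syngeR x') x = -(x.2.2 + x'.2.2) := by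
    show deriv (fun s => syngeR x' (x.1, x.2.1, s)) x.2.2 = _
    rw [funext slice_z, (gderiv (-1) (-x'.2.2) _ x.2.2).deriv]
    ring
  have pdxσ : ∀ i : Fin n, pdx i (syngeR x') x = -(x.2.1 i - x'.2.1 i) := by
    intro i
    show deriv (fun s => syngeR x' (x.1, Function.update x.2.1 i s, x.2.2)) (x.2.1 i) = _
    rw [funext (slice_i i), (gderiv (-1) (x'.2.1 i) _ (x.2.1 i)).deriv]
    ring
  -- second derivative of u·σ^j in t
  have Ht : pdt (pdt (fun y => u y * syngeR x' y ^ j)) x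
      = pdt (pdt u) x * syngeR x' x ^ j
        + (pdt (syngeR x') x * pdt u x) * (2*(j:ℝ) * syngeR x' x ^ (j-1))
        + ((x.1 - x'.1)^2) * ((j:ℝ)*((j:ℝ)-1) * u x * syngeR x' x ^ (j-2))
        + (j:ℝ) * u x * syngeR x' x ^ (j-1) := by
    rw [pdt_pdt]
    have hFt : (fun s => (fun y => u y * syngeR x' y ^ j) (s, x.2.1, x.2.2))
        = fun s => (fun s => u (s, x.2.1, x.2.2)) s
          * ((syngeR x' x - (1/2)*(x.1 - x'.1)^2) + 1 * ((1/2) * (s - x'.1)^2)) ^ j := by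
      funext s
      show u (s, x.2.1, x.2.2) * syngeR x' (s, x.2.1, x.2.2) ^ j = _
      rw [slice_t s]
    rw [hFt, key1d j 1 x'.1 _ _ x.1 hht (by rw [hgt]; exact hσ)]
    rw [hgt]
    rw [← pdt_pdt u x]
    have e1 : deriv (fun s => u (s, x.2.1, x.2.2)) x.1 = pdt u x := rfl
    have e2 : u (x.1, x.2.1, x.2.2) = u x := rfl
    rw [e1, e2, pdtσ]
    ring
  -- second derivative in z
  have Hz : pdz (pdz (fun y => u y * syngeR x' y ^ j)) x
      = pdz (pdz u) x * syngeR x' x ^ j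
        + (pdz (syngeR x') x * pdz u x) * (2*(j:ℝ) * syngeR x' x ^ (j-1))
        + ((x.2.2 + x'.2.2)^2) * ((j:ℝ)*((j:ℝ)-1) * u x * syngeR x' x ^ (j-2))
        - (j:ℝ) * u x * syngeR x' x ^ (j-1) := by
    rw [pdz_pdz]
    have hFz : (fun s => (fun y => u y * syngeR x' y ^ j) (x.1, x.2.1, s))
        = fun s => (fun s => u (x.1, x.2.1, s)) s
          * ((syngeR x' x + (1/2)*(x.2.2 + x'.2.2)^2)
              + (-1) * ((1/2) * (s - (-x'.2.2))^2)) ^ j := by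
      funext s
      show u (x.1, x.2.1, s) * syngeR x' (x.1, x.2.1, s) ^ j = _
      rw [slice_z s]
    rw [hFz, key1d j (-1) (-x'.2.2) _ _ x.2.2 hhz (by rw [hgz]; exact hσ)]
    rw [hgz]
    rw [← pdz_pdz u x]
    have e1 : deriv (fun s => u (x.1, x.2.1, s)) x.2.2 = pdz u x := rfl
    have e2 : u (x.1, x.2.1, x.2.2) = u x := rfl
    rw [e1, e2, pdzσ]
    ring
  -- second derivative in each xᵢ
  have Hi : ∀ i : Fin n, pdx i (pdx i (fun y => u y * syngeR x' y ^ j)) x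
      = pdx i (pdx i u) x * syngeR x' x ^ j
        + (pdx i (syngeR x') x * pdx i u x) * (2*(j:ℝ) * syngeR x' x ^ (j-1))
        + ((x.2.1 i - x'.2.1 i)^2) * ((j:ℝ)*((j:ℝ)-1) * u x * syngeR x' x ^ (j-2))
        - (j:ℝ) * u x * syngeR x' x ^ (j-1) := by
    intro i
    rw [pdx_pdx]
    have hFi : (fun s => (fun y => u y * syngeR x' y ^ j) (x.1, Function.update x.2.1 i s, x.2.2))
        = fun s => (fun s => u (x.1, Function.update x.2.1 i s, x.2.2)) s
          * ((syngeR x' x + (1/2)*(x.2.1 i - x'.2.1 i)^2)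
              + (-1) * ((1/2) * (s - x'.2.1 i)^2)) ^ j := by
      funext s
      show u (x.1, Function.update x.2.1 i s, x.2.2)
          * syngeR x' (x.1, Function.update x.2.1 i s, x.2.2) ^ j = _
      rw [slice_i i s]
    rw [hFi, key1d j (-1) (x'.2.1 i) _ _ (x.2.1 i) (hhx i) (by rw [hgi i]; exact hσ)]
    rw [hgi i]
    rw [← pdx_pdx i u x]
    have e1 : deriv (fun s => u (x.1, Function.update x.2.1 i s, x.2.2)) (x.2.1 i)
        = pdx i u x := rfl
    have e2 : u (x.1, Function.update x.2.1 i (x.2.1 i), x.2.2) = u x := by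
      rw [Function.update_eq_self]
    rw [e1, e2, pdxσ i]
    ring
  -- sum over the transverse coordinates
  have hS : ∑ i : Fin n, pdx i (pdx i (fun y => u y * syngeR x' y ^ j)) x
      = (∑ i : Fin n, pdx i (pdx i u) x) * syngeR x' x ^ j
        + (∑ i : Fin n, pdx i (syngeR x') x * pdx i u x) * (2*(j:ℝ) * syngeR x' x ^ (j-1))
        + (∑ i : Fin n, (x.2.1 i - x'.2.1 i)^2) * ((j:ℝ)*((j:ℝ)-1) * u x * syngeR x' x ^ (j-2))
        - (n:ℝ) * ((j:ℝ) * u x * syngeR x' x ^ (j-1)) := by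
    rw [Finset.sum_congr rfl (fun i _ => Hi i)]
    rw [Finset.sum_sub_distrib, Finset.sum_add_distrib, Finset.sum_add_distrib,
      ← Finset.sum_mul, ← Finset.sum_mul, ← Finset.sum_mul, Finset.sum_const,
      Finset.card_univ, Fintype.card_fin, nsmul_eq_mul]
  -- the 2σ identity
  have h2σ : (x.1 - x'.1)^2 - (∑ i : Fin n, (x.2.1 i - x'.2.1 i)^2) - (x.2.2 + x'.2.2)^2
      = 2 * syngeR x' x := by
    simp only [syngeR]; ring
  have hpow : syngeR x' x ^ (j-2) * syngeR x' x = syngeR x' x ^ (j-1) := by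
    have h4 := zpow_add_one₀ hσ (j-2)
    rw [show j - 2 + 1 = j - 1 by ring] at h4
    exact h4.symm
  simp only [box, contr]
  rw [Ht, Hz, hS]
  linear_combination (2*(j:ℝ)*((j:ℝ)-1)*u x) * hpow
    + ((j:ℝ)*((j:ℝ)-1)*u x*syngeR x' x ^ (j-2)) * h2σ


end
end

section
/- Let d ≥ 2 be even, set n = (d−2)/2, fix x′ ∈ ℝ^d, m² ∈ ℝ, N ∈ ℕ, and let u_0, …, u_N be smooth real functions on an open set U ⊆ ℝ^d. Then for every x ∈ U with σ(x,x′) ≠ 0: (□ + m²)( Σ_{j=0}^{N} u_j·σ^{j−n} ) = (2−d)·(σ^μ∂_μu_0)·σ^{−n−1} + Σ_{j=0}^{N−1} [ (□+m²)u_j + (2j+4−d)·σ^μ∂_μu_{j+1} + (j+1)(2j+4−d)·u_{j+1} ]·σ^{j−n} + ((□+m²)u_N)·σ^{N−n}, all powers being integer powers of σ(x,x′) and all derivatives in x. (This yields the Hadamard recursion relations for the U-coefficients in even dimensions.) -/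
noncomputable section

namespace Had
variable {n : ℕ}

def et : Pt n := (1, 0, 0)
def ex (i : Fin n) : Pt n := (0, Pi.single i 1, 0)
def ez : Pt n := (0, 0, 1)

lemma curve_t (x : Pt n) : HasDerivAt (fun s => ((s, x.2.1, x.2.2) : Pt n)) et x.1 :=
  (hasDerivAt_id x.1).prodMk ((hasDerivAt_const _ _).prodMk (hasDerivAt_const _ _))

lemma curve_x (x : Pt n) (i : Fin n) :
    HasDerivAt (fun s => ((x.1, Function.update x.2.1 i s, x.2.2) : Pt n)) (ex i) (x.2.1 i) := by
  refine (hasDerivAt_const _ _).prodMk (HasDerivAt.prodMk ?_ (hasDerivAt_const _ _))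
  rw [hasDerivAt_pi]
  intro j
  rcases eq_or_ne j i with rfl | hj
  · simpa [Function.update] using hasDerivAt_id' (x.2.1 j)
  · simpa [Function.update, hj, Pi.single_apply] using hasDerivAt_const (x.2.1 i) (x.2.1 j)

lemma curve_z (x : Pt n) : HasDerivAt (fun s => ((x.1, x.2.1, s) : Pt n)) ez x.2.2 :=
  (hasDerivAt_const _ _).prodMk ((hasDerivAt_const _ _).prodMk (hasDerivAt_id _))

lemma pdt_eq {f : Pt n → ℝ} {f' : Pt n →L[ℝ] ℝ} {x : Pt n} (hf : HasFDerivAt f f' x) :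
    pdt f x = f' et := by
  have h : HasDerivAt (fun s => f (s, x.2.1, x.2.2)) (f' et) x.1 :=
    hf.comp_hasDerivAt x.1 (by simpa using curve_t x)
  exact h.deriv

lemma pdx_eq {f : Pt n → ℝ} {f' : Pt n →L[ℝ] ℝ} {x : Pt n} (i : Fin n) (hf : HasFDerivAt f f' x) :
    pdx i f x = f' (ex i) := by
  have hf' : HasFDerivAt f f' ((x.1, Function.update x.2.1 i (x.2.1 i), x.2.2) : Pt n) := by
    simpa [Function.update_eq_self] using hf
  have h : HasDerivAt (fun s => f (x.1, Function.update x.2.1 i s, x.2.2)) (f' (ex i)) (x.2.1 i) :=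
    hf'.comp_hasDerivAt _ (curve_x x i)
  exact h.deriv

lemma pdz_eq {f : Pt n → ℝ} {f' : Pt n →L[ℝ] ℝ} {x : Pt n} (hf : HasFDerivAt f f' x) :
    pdz f x = f' ez := by
  have h : HasDerivAt (fun s => f (x.1, x.2.1, s)) (f' ez) x.2.2 :=
    hf.comp_hasDerivAt _ (by simpa using curve_z x)
  exact h.deriv

lemma pdt_congr {f g : Pt n → ℝ} {x : Pt n} (h : f =ᶠ[nhds x] g) : pdt f x = pdt g x := by
  apply Filter.EventuallyEq.deriv_eq
  have hc : Filter.Tendsto (fun s => ((s, x.2.1, x.2.2) : Pt n)) (nhds x.1) (nhds x) :=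
    (curve_t x).continuousAt
  exact h.comp_tendsto hc

lemma pdx_congr {f g : Pt n → ℝ} {x : Pt n} (i : Fin n) (h : f =ᶠ[nhds x] g) :
    pdx i f x = pdx i g x := by
  apply Filter.EventuallyEq.deriv_eq
  have hc : Filter.Tendsto (fun s => ((x.1, Function.update x.2.1 i s, x.2.2) : Pt n))
      (nhds (x.2.1 i)) (nhds x) := by
    have h2 := (curve_x x i).continuousAt
    unfold ContinuousAt at h2
    simp only [Function.update_eq_self] at h2
    exact h2
  exact h.comp_tendsto hc

lemma pdz_congr {f g : Pt n → ℝ} {x : Pt n} (h : f =ᶠ[nhds x] g) : pdz f x = pdz g x := by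
  apply Filter.EventuallyEq.deriv_eq
  have hc : Filter.Tendsto (fun s => ((x.1, x.2.1, s) : Pt n)) (nhds x.2.2) (nhds x) :=
    (curve_z x).continuousAt
  exact h.comp_tendsto hc


-- coordinate CLMs
def Lt : Pt n →L[ℝ] ℝ := ContinuousLinearMap.fst ℝ ℝ ((Fin n → ℝ) × ℝ)
def Lx (i : Fin n) : Pt n →L[ℝ] ℝ :=
  (ContinuousLinearMap.proj i).comp
    ((ContinuousLinearMap.fst ℝ (Fin n → ℝ) ℝ).comp (ContinuousLinearMap.snd ℝ ℝ ((Fin n → ℝ) × ℝ)))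
def Lz : Pt n →L[ℝ] ℝ :=
  (ContinuousLinearMap.snd ℝ (Fin n → ℝ) ℝ).comp (ContinuousLinearMap.snd ℝ ℝ ((Fin n → ℝ) × ℝ))

@[simp] lemma Lt_apply (v : Pt n) : Lt v = v.1 := rfl
@[simp] lemma Lx_apply (i : Fin n) (v : Pt n) : Lx i v = v.2.1 i := rfl
@[simp] lemma Lz_apply (v : Pt n) : Lz v = v.2.2 := rfl

@[simp] lemma et_1 : (et : Pt n).1 = 1 := rfl
@[simp] lemma et_21 : (et : Pt n).2.1 = 0 := rfl
@[simp] lemma et_22 : (et : Pt n).2.2 = 0 := rfl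
@[simp] lemma ex_1 (i : Fin n) : (ex i : Pt n).1 = 0 := rfl
@[simp] lemma ex_21 (i : Fin n) : (ex i : Pt n).2.1 = Pi.single i 1 := rfl
@[simp] lemma ex_22 (i : Fin n) : (ex i : Pt n).2.2 = 0 := rfl
@[simp] lemma ez_1 : (ez : Pt n).1 = 0 := rfl
@[simp] lemma ez_21 : (ez : Pt n).2.1 = 0 := rfl
@[simp] lemma ez_22 : (ez : Pt n).2.2 = 1 := rfl

/-- derivative CLM of synge at y -/
def Dσ (x' y : Pt n) : Pt n →L[ℝ] ℝ :=
  (y.1 - x'.1) • Lt - (∑ i : Fin n, (y.2.1 i - x'.2.1 i) • Lx i) - (y.2.2 - x'.2.2) • Lz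

lemma Dσ_apply (x' y v : Pt n) :
    Dσ x' y v = (y.1 - x'.1) * v.1 - (∑ i : Fin n, (y.2.1 i - x'.2.1 i) * v.2.1 i)
      - (y.2.2 - x'.2.2) * v.2.2 := by
  simp [Dσ, ContinuousLinearMap.sum_apply]

lemma sq_fderiv_aux {f : Pt n → ℝ} {L : Pt n →L[ℝ] ℝ} {y : Pt n}
    (hf : HasFDerivAt f L y) : HasFDerivAt (fun y => (f y)^2) ((2 * f y) • L) y := by
  have h := hf.fun_mul hf
  have he : f y • L + f y • L = (2 * f y) • L := by
    rw [two_mul, add_smul]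
  have hfun : (fun y => f y * f y) = fun y => (f y)^2 := funext (fun y => (sq (f y)).symm)
  rw [hfun, he] at h
  exact h

lemma hasFDerivAt_synge (x' y : Pt n) : HasFDerivAt (synge x') (Dσ x' y) y := by
  have h1 : HasFDerivAt (fun y : Pt n => (y.1 - x'.1)^2) ((2 * (y.1 - x'.1)) • Lt) y :=
    sq_fderiv_aux (((Lt (n := n)).hasFDerivAt (x := y)).sub_const x'.1)
  have h2 : ∀ i : Fin n, HasFDerivAt (fun y : Pt n => (y.2.1 i - x'.2.1 i)^2)
      ((2 * (y.2.1 i - x'.2.1 i)) • Lx i) y := fun i =>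
    sq_fderiv_aux (((Lx (n := n) i).hasFDerivAt (x := y)).sub_const (x'.2.1 i))
  have hsum : HasFDerivAt (fun y : Pt n => ∑ i : Fin n, (y.2.1 i - x'.2.1 i)^2)
      (∑ i : Fin n, (2 * (y.2.1 i - x'.2.1 i)) • Lx i) y :=
    HasFDerivAt.fun_sum (fun i _ => h2 i)
  have h3 : HasFDerivAt (fun y : Pt n => (y.2.2 - x'.2.2)^2) ((2 * (y.2.2 - x'.2.2)) • Lz) y :=
    sq_fderiv_aux (((Lz (n := n)).hasFDerivAt (x := y)).sub_const x'.2.2)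
  have h := ((h1.sub hsum).sub h3).const_mul (1/2 : ℝ)
  have he : Dσ x' y = (1/2 : ℝ) • ((2 * (y.1 - x'.1)) • Lt
      - (∑ i : Fin n, (2 * (y.2.1 i - x'.2.1 i)) • Lx i) - (2 * (y.2.2 - x'.2.2)) • Lz) := by
    refine ContinuousLinearMap.ext fun v => ?_
    rw [Dσ_apply]
    simp only [ContinuousLinearMap.smul_apply, ContinuousLinearMap.sub_apply,
      ContinuousLinearMap.sum_apply, Lt_apply, Lx_apply, Lz_apply, smul_eq_mul]
    have hs : ∑ i : Fin n, 2 * (y.2.1 i - x'.2.1 i) * v.2.1 i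
        = 2 * ∑ i : Fin n, (y.2.1 i - x'.2.1 i) * v.2.1 i := by
      rw [Finset.mul_sum]; exact Finset.sum_congr rfl (fun i _ => by ring)
    rw [hs]
    ring
  rw [he]
  exact h

@[simp] lemma Dσ_et (x' y : Pt n) : Dσ x' y et = y.1 - x'.1 := by
  simp [Dσ_apply]
@[simp] lemma Dσ_ex (x' y : Pt n) (i : Fin n) : Dσ x' y (ex i) = -(y.2.1 i - x'.2.1 i) := by
  simp [Dσ_apply, Pi.single_apply]
@[simp] lemma Dσ_ez (x' y : Pt n) : Dσ x' y ez = -(y.2.2 - x'.2.2) := by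
  simp [Dσ_apply]

/-- derivative CLM of y ↦ Dσ x' y v -/
def Q (v : Pt n) : Pt n →L[ℝ] ℝ :=
  v.1 • Lt - (∑ i : Fin n, v.2.1 i • Lx i) - v.2.2 • Lz

lemma hasFDerivAt_Dσ (x' : Pt n) (v y : Pt n) :
    HasFDerivAt (fun y => Dσ x' y v) (Q v) y := by
  have h1 : HasFDerivAt (fun y : Pt n => (y.1 - x'.1) * v.1) (v.1 • Lt) y :=
    ((Lt (n := n)).hasFDerivAt (x := y)).sub_const x'.1 |>.mul_const v.1
  have h2 : ∀ i : Fin n, HasFDerivAt (fun y : Pt n => (y.2.1 i - x'.2.1 i) * v.2.1 i)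
      (v.2.1 i • Lx i) y := fun i =>
    ((Lx (n := n) i).hasFDerivAt (x := y)).sub_const (x'.2.1 i) |>.mul_const (v.2.1 i)
  have hsum : HasFDerivAt (fun y : Pt n => ∑ i : Fin n, (y.2.1 i - x'.2.1 i) * v.2.1 i)
      (∑ i : Fin n, v.2.1 i • Lx i) y := HasFDerivAt.fun_sum (fun i _ => h2 i)
  have h3 : HasFDerivAt (fun y : Pt n => (y.2.2 - x'.2.2) * v.2.2) (v.2.2 • Lz) y :=
    ((Lz (n := n)).hasFDerivAt (x := y)).sub_const x'.2.2 |>.mul_const v.2.2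
  have h := (h1.sub hsum).sub h3
  have hfun : (fun y : Pt n => Dσ x' y v) = fun y : Pt n => (y.1 - x'.1) * v.1
      - (∑ i : Fin n, (y.2.1 i - x'.2.1 i) * v.2.1 i) - (y.2.2 - x'.2.2) * v.2.2 :=
    funext (fun y => Dσ_apply x' y v)
  rw [hfun]
  exact h

@[simp] lemma Q_et_et : Q (et : Pt n) et = 1 := by
  simp [Q, ContinuousLinearMap.sum_apply]
@[simp] lemma Q_ex_ex (i : Fin n) : Q (ex i : Pt n) (ex i) = -1 := by
  simp [Q, ContinuousLinearMap.sum_apply, Pi.single_apply]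
@[simp] lemma Q_ez_ez : Q (ez : Pt n) ez = -1 := by
  simp [Q, ContinuousLinearMap.sum_apply]

lemma continuous_synge (x' : Pt n) : Continuous (synge x') := by
  have hd : Differentiable ℝ (synge x') := fun y => (hasFDerivAt_synge x' y).differentiableAt
  exact hd.continuous

lemma master (x' : Pt n) (N : ℕ) (U : Set (Pt n)) (u : ℕ → Pt n → ℝ) (p : ℕ → ℤ)
    (hU : IsOpen U) (hu : ∀ j ≤ N, ContDiffOn ℝ (⊤ : ℕ∞) (u j) U)
    (D : (Pt n → ℝ) → Pt n → ℝ) (v : Pt n)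
    (hD : ∀ {f : Pt n → ℝ} {f' : Pt n →L[ℝ] ℝ} {z : Pt n}, HasFDerivAt f f' z → D f z = f' v)
    (hDc : ∀ {f g : Pt n → ℝ} {z : Pt n}, f =ᶠ[nhds z] g → D f z = D g z)
    (x : Pt n) (hxU : x ∈ U) (hσ : synge x' x ≠ 0) :
    D (D (fun y => ∑ j ∈ Finset.range (N + 1), u j y * synge x' y ^ p j)) x
      = ∑ j ∈ Finset.range (N + 1),
        (synge x' x ^ p j * D (D (u j)) x
         + 2 * (p j : ℝ) * synge x' x ^ (p j - 1) * Dσ x' x v * D (u j) x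
         + (p j : ℝ) * ((p j : ℝ) - 1) * synge x' x ^ (p j - 2) * (Dσ x' x v)^2 * u j x
         + (p j : ℝ) * synge x' x ^ (p j - 1) * (Q v v) * u j x) := by
  have hV : IsOpen (U ∩ {y | synge x' y ≠ 0}) :=
    hU.inter (isOpen_compl_singleton.preimage (continuous_synge x'))
  have hxV : x ∈ U ∩ {y | synge x' y ≠ 0} := ⟨hxU, hσ⟩
  have hud : ∀ j ≤ N, ∀ y ∈ U, HasFDerivAt (u j) (fderiv ℝ (u j) y) y := fun j hj y hy =>
    (((hu j hj).contDiffAt (hU.mem_nhds hy)).differentiableAt (by simp)).hasFDerivAt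
  -- derivative of F on V
  have hF : ∀ y ∈ U ∩ {y | synge x' y ≠ 0},
      HasFDerivAt (fun y => ∑ j ∈ Finset.range (N + 1), u j y * synge x' y ^ p j)
        (∑ j ∈ Finset.range (N + 1),
          (u j y • (((p j : ℝ) * synge x' y ^ (p j - 1)) • Dσ x' y)
            + synge x' y ^ p j • fderiv ℝ (u j) y)) y := by
    intro y hy
    refine HasFDerivAt.fun_sum fun j hj => ?_
    have hj' : j ≤ N := Nat.lt_succ_iff.mp (Finset.mem_range.mp hj)
    exact (hud j hj' y hy.1).mul
      ((hasDerivAt_zpow (p j) _ (Or.inl hy.2)).comp_hasFDerivAt y (hasFDerivAt_synge x' y))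
  -- eventual formula for D F
  have hev : (fun z => D (fun y => ∑ j ∈ Finset.range (N + 1), u j y * synge x' y ^ p j) z)
      =ᶠ[nhds x] (fun y => ∑ j ∈ Finset.range (N + 1),
        (u j y * ((p j : ℝ) * synge x' y ^ (p j - 1) * Dσ x' y v)
          + synge x' y ^ p j * fderiv ℝ (u j) y v)) := by
    refine Filter.eventuallyEq_of_mem (hV.mem_nhds hxV) (fun y hy => ?_)
    rw [hD (hF y hy)]
    simp only [ContinuousLinearMap.sum_apply, ContinuousLinearMap.add_apply,
      ContinuousLinearMap.smul_apply, smul_eq_mul]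
    all_goals exact Finset.sum_congr rfl fun j _ => by ring
  -- differentiability of the fderiv-slices
  have hw : ∀ j ≤ N, DifferentiableAt ℝ (fun y => fderiv ℝ (u j) y v) x := by
    intro j hj
    have h1 : ContDiffOn ℝ (⊤ : ℕ∞) (fderiv ℝ (u j)) U :=
      (hu j hj).fderiv_of_isOpen hU (by simp)
    have h2 : DifferentiableAt ℝ (fderiv ℝ (u j)) x :=
      (h1.contDiffAt (hU.mem_nhds hxU)).differentiableAt (by simp)
    exact (ContinuousLinearMap.apply ℝ ℝ v).differentiableAt.comp x h2
  -- second derivatives of u in terms of fderiv slices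
  have hDDu : ∀ j ≤ N, D (D (u j)) x = fderiv ℝ (fun y => fderiv ℝ (u j) y v) x v := by
    intro j hj
    have h1 : (fun z => D (u j) z) =ᶠ[nhds x] (fun y => fderiv ℝ (u j) y v) :=
      Filter.eventuallyEq_of_mem (hU.mem_nhds hxU) (fun y hy => hD (hud j hj y hy))
    rw [hDc h1, hD (hw j hj).hasFDerivAt]
  have hDu : ∀ j ≤ N, D (u j) x = fderiv ℝ (u j) x v := fun j hj => hD (hud j hj x hxU)
  -- derivative of G at x
  have hG : HasFDerivAt (fun y => ∑ j ∈ Finset.range (N + 1),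
      (u j y * ((p j : ℝ) * synge x' y ^ (p j - 1) * Dσ x' y v)
        + synge x' y ^ p j * fderiv ℝ (u j) y v))
      (∑ j ∈ Finset.range (N + 1),
        ((u j x • (((p j : ℝ) * synge x' x ^ (p j - 1)) • Q v
            + Dσ x' x v • ((p j : ℝ) • (((p j - 1 : ℤ) : ℝ) * synge x' x ^ (p j - 1 - 1)) • Dσ x' x))
          + ((p j : ℝ) * synge x' x ^ (p j - 1) * Dσ x' x v) • fderiv ℝ (u j) x)
        + (synge x' x ^ p j • fderiv ℝ (fun y => fderiv ℝ (u j) y v) x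
          + fderiv ℝ (u j) x v • (((p j : ℝ) * synge x' x ^ (p j - 1)) • Dσ x' x)))) x := by
    refine HasFDerivAt.fun_sum fun j hj => ?_
    have hj' : j ≤ N := Nat.lt_succ_iff.mp (Finset.mem_range.mp hj)
    have c1 : HasFDerivAt (fun y => synge x' y ^ (p j - 1))
        ((((p j - 1 : ℤ) : ℝ) * synge x' x ^ (p j - 1 - 1)) • Dσ x' x) x :=
      (hasDerivAt_zpow (p j - 1) _ (Or.inl hσ)).comp_hasFDerivAt x (hasFDerivAt_synge x' x)
    have c2 := c1.const_mul ((p j : ℝ))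
    have c3 := c2.mul (hasFDerivAt_Dσ x' v x)
    have c4 := (hud j hj' x hxU).mul c3
    have d1 : HasFDerivAt (fun y => synge x' y ^ p j)
        (((p j : ℝ) * synge x' x ^ (p j - 1)) • Dσ x' x) x :=
      (hasDerivAt_zpow (p j) _ (Or.inl hσ)).comp_hasFDerivAt x (hasFDerivAt_synge x' x)
    have d3 := d1.mul (hw j hj').hasFDerivAt
    exact c4.add d3
  -- conclude
  rw [hDc hev, hD hG]
  simp only [ContinuousLinearMap.sum_apply, ContinuousLinearMap.add_apply,
    ContinuousLinearMap.smul_apply, smul_eq_mul]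
  refine Finset.sum_congr rfl fun j hj => ?_
  have hj' : j ≤ N := Nat.lt_succ_iff.mp (Finset.mem_range.mp hj)
  rw [hDDu j hj', hDu j hj']
  have e2 : synge x' x ^ (p j - 1 - 1) = synge x' x ^ (p j - 2) := by
    congr 1; ring
  rw [e2]
  push_cast
  ring

lemma reindex (k N : ℕ) (σx : ℝ) (A B C : ℕ → ℝ) :
    ∑ j ∈ Finset.range (N + 1),
      (B j * σx ^ ((j : ℤ) - (k : ℤ))
        + 2 * (((j : ℤ) - (k : ℤ) : ℤ) : ℝ) * C j * σx ^ ((j : ℤ) - (k : ℤ) - 1)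
        + 2 * (j : ℝ) * (((j : ℤ) - (k : ℤ) : ℤ) : ℝ) * A j * σx ^ ((j : ℤ) - (k : ℤ) - 1))
    = (2 - (2 * (k : ℝ) + 2)) * C 0 * σx ^ (-(k : ℤ) - 1)
      + (∑ j ∈ Finset.range N,
          (B j + (2 * (j : ℝ) + 4 - (2 * (k : ℝ) + 2)) * C (j + 1)
            + ((j : ℝ) + 1) * (2 * (j : ℝ) + 4 - (2 * (k : ℝ) + 2)) * A (j + 1))
            * σx ^ ((j : ℤ) - (k : ℤ)))
      + B N * σx ^ ((N : ℤ) - (k : ℤ)) := by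
  have hsplit : ∀ j : ℕ, B j * σx ^ ((j : ℤ) - (k : ℤ))
      + 2 * (((j : ℤ) - (k : ℤ) : ℤ) : ℝ) * C j * σx ^ ((j : ℤ) - (k : ℤ) - 1)
      + 2 * (j : ℝ) * (((j : ℤ) - (k : ℤ) : ℤ) : ℝ) * A j * σx ^ ((j : ℤ) - (k : ℤ) - 1)
      = (fun j : ℕ => B j * σx ^ ((j : ℤ) - (k : ℤ))) j
        + (fun j : ℕ => 2 * (((j : ℤ) - (k : ℤ) : ℤ) : ℝ) * C j * σx ^ ((j : ℤ) - (k : ℤ) - 1)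
          + 2 * (j : ℝ) * (((j : ℤ) - (k : ℤ) : ℤ) : ℝ) * A j * σx ^ ((j : ℤ) - (k : ℤ) - 1)) j :=
    fun j => by ring
  rw [Finset.sum_congr rfl fun j _ => hsplit j, Finset.sum_add_distrib,
    Finset.sum_range_succ (fun j : ℕ => B j * σx ^ ((j : ℤ) - (k : ℤ))),
    Finset.sum_range_succ']
  have h0 : (2 : ℝ) * ((((0 : ℕ) : ℤ) - (k : ℤ) : ℤ) : ℝ) * C 0 * σx ^ (((0 : ℕ) : ℤ) - (k : ℤ) - 1)
      + 2 * ((0 : ℕ) : ℝ) * ((((0 : ℕ) : ℤ) - (k : ℤ) : ℤ) : ℝ) * A 0 * σx ^ (((0 : ℕ) : ℤ) - (k : ℤ) - 1)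
      = (2 - (2 * (k : ℝ) + 2)) * C 0 * σx ^ (-(k : ℤ) - 1) := by
    have he : ((0 : ℕ) : ℤ) - (k : ℤ) - 1 = -(k : ℤ) - 1 := by simp
    rw [he]
    push_cast
    ring
  rw [h0]
  have hmid : ∀ j ∈ Finset.range N,
      (2 : ℝ) * ((((j+1 : ℕ) : ℤ) - (k : ℤ) : ℤ) : ℝ) * C (j+1) * σx ^ (((j+1 : ℕ) : ℤ) - (k : ℤ) - 1)
        + 2 * ((j+1 : ℕ) : ℝ) * ((((j+1 : ℕ) : ℤ) - (k : ℤ) : ℤ) : ℝ) * A (j+1)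
          * σx ^ (((j+1 : ℕ) : ℤ) - (k : ℤ) - 1)
      = ((2 * (j : ℝ) + 4 - (2 * (k : ℝ) + 2)) * C (j + 1)
          + ((j : ℝ) + 1) * (2 * (j : ℝ) + 4 - (2 * (k : ℝ) + 2)) * A (j + 1))
          * σx ^ ((j : ℤ) - (k : ℤ)) := by
    intro j _
    have he : ((j+1 : ℕ) : ℤ) - (k : ℤ) - 1 = (j : ℤ) - (k : ℤ) := by push_cast; ring
    rw [he]
    push_cast
    ring
  rw [Finset.sum_congr rfl hmid]
  have hfin : ∀ j ∈ Finset.range N,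
      (B j + (2 * (j : ℝ) + 4 - (2 * (k : ℝ) + 2)) * C (j + 1)
        + ((j : ℝ) + 1) * (2 * (j : ℝ) + 4 - (2 * (k : ℝ) + 2)) * A (j + 1))
        * σx ^ ((j : ℤ) - (k : ℤ))
      = B j * σx ^ ((j : ℤ) - (k : ℤ))
        + ((2 * (j : ℝ) + 4 - (2 * (k : ℝ) + 2)) * C (j + 1)
          + ((j : ℝ) + 1) * (2 * (j : ℝ) + 4 - (2 * (k : ℝ) + 2)) * A (j + 1))
          * σx ^ ((j : ℤ) - (k : ℤ)) := fun j _ => by ring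
  rw [Finset.sum_congr rfl hfin, Finset.sum_add_distrib]
  ring

end Had

/-- Hadamard recursion relations for the U-coefficients in even dimension d = 2k + 2
(so n = (d−2)/2 = k): for smooth u_0, …, u_N on an open U ⊆ ℝ^d and x ∈ U with
σ(x,x′) ≠ 0,
(□+m²)(Σ_{j=0}^{N} u_j σ^{j−n})
  = (2−d)(σ^μ∂_μu_0)σ^{−n−1}
  + Σ_{j=0}^{N−1} [(□+m²)u_j + (2j+4−d)σ^μ∂_μu_{j+1} + (j+1)(2j+4−d)u_{j+1}] σ^{j−n}
  + ((□+m²)u_N) σ^{N−n}. -/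
theorem hadamard_recursion_U_even (k : ℕ) (x' : Pt (2 * k)) (m2 : ℝ) (N : ℕ)
    (U : Set (Pt (2 * k))) (hU : IsOpen U) (u : ℕ → Pt (2 * k) → ℝ)
    (hu : ∀ j ≤ N, ContDiffOn ℝ (⊤ : ℕ∞) (u j) U) (x : Pt (2 * k)) (hx : x ∈ U)
    (hσ : synge x' x ≠ 0) :
    box (fun y => ∑ j ∈ Finset.range (N + 1), u j y * synge x' y ^ ((j : ℤ) - (k : ℤ))) x
      + m2 * ∑ j ∈ Finset.range (N + 1), u j x * synge x' x ^ ((j : ℤ) - (k : ℤ)) =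
    (2 - (2 * (k : ℝ) + 2)) * contr (synge x') (u 0) x * synge x' x ^ (-(k : ℤ) - 1)
    + (∑ j ∈ Finset.range N,
        ((box (u j) x + m2 * u j x)
          + (2 * (j : ℝ) + 4 - (2 * (k : ℝ) + 2)) * contr (synge x') (u (j + 1)) x
          + ((j : ℝ) + 1) * (2 * (j : ℝ) + 4 - (2 * (k : ℝ) + 2)) * u (j + 1) x)
          * synge x' x ^ ((j : ℤ) - (k : ℤ)))
    + (box (u N) x + m2 * u N x) * synge x' x ^ ((N : ℤ) - (k : ℤ)) := by
  have Ht := Had.master x' N U u (fun j => (j : ℤ) - (k : ℤ)) hU hu pdt Had.et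
    (fun hf => Had.pdt_eq hf) (fun h => Had.pdt_congr h) x hx hσ
  have Hx := fun i => Had.master x' N U u (fun j => (j : ℤ) - (k : ℤ)) hU hu (pdx i) (Had.ex i)
    (fun hf => Had.pdx_eq i hf) (fun h => Had.pdx_congr i h) x hx hσ
  have Hz := Had.master x' N U u (fun j => (j : ℤ) - (k : ℤ)) hU hu pdz Had.ez
    (fun hf => Had.pdz_eq hf) (fun h => Had.pdz_congr h) x hx hσ
  simp only [Had.Dσ_et, Had.Dσ_ex, Had.Dσ_ez, Had.Q_et_et, Had.Q_ex_ex, Had.Q_ez_ez,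
    mul_one, mul_neg_one] at Ht Hx Hz
  rw [show (box (fun y => ∑ j ∈ Finset.range (N + 1),
        u j y * synge x' y ^ ((j : ℤ) - (k : ℤ))) x)
      = pdt (pdt (fun y => ∑ j ∈ Finset.range (N + 1),
          u j y * synge x' y ^ ((j : ℤ) - (k : ℤ)))) x
        - (∑ i : Fin (2 * k), pdx i (pdx i (fun y => ∑ j ∈ Finset.range (N + 1),
            u j y * synge x' y ^ ((j : ℤ) - (k : ℤ)))) x)
        - pdz (pdz (fun y => ∑ j ∈ Finset.range (N + 1),
            u j y * synge x' y ^ ((j : ℤ) - (k : ℤ)))) x from rfl]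
  rw [Ht, Hz, Finset.sum_congr rfl (fun i _ => Hx i), Finset.sum_comm,
    ← Finset.sum_sub_distrib, ← Finset.sum_sub_distrib, Finset.mul_sum,
    ← Finset.sum_add_distrib]
  refine Eq.trans (Finset.sum_congr rfl fun j hj => ?_)
    (Had.reindex k N (synge x' x) (fun j => u j x)
      (fun j => box (u j) x + m2 * u j x) (fun j => contr (synge x') (u j) x))
  simp only [box, contr]
  have hpdxσ : ∀ i : Fin (2 * k), pdx i (synge x') x = -(x.2.1 i - x'.2.1 i) := fun i => by
    rw [Had.pdx_eq i (Had.hasFDerivAt_synge x' x)]; simp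
  rw [Had.pdt_eq (Had.hasFDerivAt_synge x' x), Had.pdz_eq (Had.hasFDerivAt_synge x' x),
    Had.Dσ_et, Had.Dσ_ez]
  have hcontr : ∑ i : Fin (2 * k), pdx i (synge x') x * pdx i (u j) x
      = -∑ i : Fin (2 * k), (x.2.1 i - x'.2.1 i) * pdx i (u j) x := by
    rw [← Finset.sum_neg_distrib]
    exact Finset.sum_congr rfl fun i _ => by rw [hpdxσ i]; ring
  rw [hcontr]
  have hsplit : ∀ i ∈ (Finset.univ : Finset (Fin (2 * k))),
      (synge x' x ^ ((j : ℤ) - (k : ℤ)) * pdx i (pdx i (u j)) x +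
        2 * (((j : ℤ) - (k : ℤ) : ℤ) : ℝ) * synge x' x ^ ((j : ℤ) - (k : ℤ) - 1)
          * -(x.2.1 i - x'.2.1 i) * pdx i (u j) x +
        (((j : ℤ) - (k : ℤ) : ℤ) : ℝ) * ((((j : ℤ) - (k : ℤ) : ℤ) : ℝ) - 1)
          * synge x' x ^ ((j : ℤ) - (k : ℤ) - 2) * (-(x.2.1 i - x'.2.1 i)) ^ 2 * u j x +
        -((((j : ℤ) - (k : ℤ) : ℤ) : ℝ) * synge x' x ^ ((j : ℤ) - (k : ℤ) - 1)) * u j x)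
      = synge x' x ^ ((j : ℤ) - (k : ℤ)) * pdx i (pdx i (u j)) x
        + (-(2 * (((j : ℤ) - (k : ℤ) : ℤ) : ℝ) * synge x' x ^ ((j : ℤ) - (k : ℤ) - 1)))
          * ((x.2.1 i - x'.2.1 i) * pdx i (u j) x)
        + ((((j : ℤ) - (k : ℤ) : ℤ) : ℝ) * ((((j : ℤ) - (k : ℤ) : ℤ) : ℝ) - 1)
            * synge x' x ^ ((j : ℤ) - (k : ℤ) - 2) * u j x) * ((x.2.1 i - x'.2.1 i) ^ 2)
        + (-((((j : ℤ) - (k : ℤ) : ℤ) : ℝ) * synge x' x ^ ((j : ℤ) - (k : ℤ) - 1) * u j x)) :=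
    fun i _ => by ring
  rw [Finset.sum_congr rfl hsplit, Finset.sum_add_distrib, Finset.sum_add_distrib,
    Finset.sum_add_distrib, ← Finset.mul_sum, ← Finset.mul_sum, ← Finset.mul_sum,
    Finset.sum_const, Finset.card_univ, Fintype.card_fin, nsmul_eq_mul]
  have hS0 : ∑ i : Fin (2 * k), (x.2.1 i - x'.2.1 i) ^ 2
      = (x.1 - x'.1) ^ 2 - (x.2.2 - x'.2.2) ^ 2 - 2 * synge x' x := by
    simp only [synge]; ring
  rw [hS0]
  have hz2 := zpow_add_one₀ hσ ((j : ℤ) - (k : ℤ) - 1)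
  rw [show (j : ℤ) - (k : ℤ) - 1 + 1 = (j : ℤ) - (k : ℤ) from by ring] at hz2
  have hz1 := zpow_add_one₀ hσ ((j : ℤ) - (k : ℤ) - 2)
  rw [show (j : ℤ) - (k : ℤ) - 2 + 1 = (j : ℤ) - (k : ℤ) - 1 from by ring] at hz1
  rw [hz2, hz1]
  push_cast
  ring


end
end

section
/- Let κ > 0 and work on ℝ⁴ with coordinates x = (t, x_1, x_2, z). On the region {(x,x′) : z + z′ > 0}, the functions u′_0(x,x′) := 1 and v′_0(x,x′) := −2κ/(z+z′) satisfy the first Robin–Hadamard recursion relation for the massless (m = 0) field in dimension d = 4: □u′_0 + 2·σ_−^μ∂_μv′_0 + 2·v′_0 = 0 (equivalently σ_−^μ∂_μv′_0 = −v′_0), where derivatives are in x. Moreover, with u_0 := 1 and v_0 := 0, the associated boundary condition holds at z = 0: ∂_z(u_0 + u′_0)|_{z=0} + (∂_zσ)|_{z=0}·(v_0 − v′_0)|_{z=0} = κ·(u_0 + u′_0)|_{z=0}, both sides equaling 2κ (for z′ > 0). -/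
noncomputable section

theorem deriv_const_div_add (c b s : ℝ) (hs : s + b ≠ 0) :
    deriv (fun s => c / (s + b)) s = -(c / (s + b) ^ 2) := by
  simp [div_eq_mul_inv, hs]

section Derivatives

variable {n : ℕ}

theorem pdt_const (c : ℝ) : pdt (fun _ : Pt n => c) = fun _ => 0 := by
  ext; simp [pdt]

theorem pdx_const (i : Fin n) (c : ℝ) : pdx i (fun _ : Pt n => c) = fun _ => 0 := by
  ext; simp [pdx]

theorem pdz_const (c : ℝ) : pdz (fun _ : Pt n => c) = fun _ => 0 := by
  ext; simp [pdz]

theorem box_const (c : ℝ) (x : Pt n) : box (fun _ => c) x = 0 := by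
  simp only [box, pdt_const, pdx_const, pdz_const, Finset.sum_const_zero, sub_zero]

theorem contr_comp_snd_snd (f : Pt n → ℝ) (g : ℝ → ℝ) (x : Pt n) :
    contr f (fun y => g y.2.2) x = -(pdz f x * deriv g x.2.2) := by
  simp [contr, pdt, pdx, pdz]

theorem pdz_syngeR (x' x : Pt n) : pdz (syngeR x') x = -(x.2.2 + x'.2.2) := by
  simp [pdz, syngeR]

theorem pdz_synge (x' x : Pt n) : pdz (synge x') x = -(x.2.2 - x'.2.2) := by
  simp [pdz, synge]

/- On functions of z alone, σ₋^μ∂_μ acts as (z + z′)∂_z (Euler's operator in z + z′), and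
c / (z + z′) is homogeneous of degree −1. -/
theorem contr_syngeR_const_div (c : ℝ) (x' x : Pt n) (hx : x.2.2 + x'.2.2 ≠ 0) :
    contr (syngeR x') (fun y => c / (y.2.2 + x'.2.2)) x = -(c / (x.2.2 + x'.2.2)) := by
  rw [contr_comp_snd_snd _ (fun s => c / (s + x'.2.2)), pdz_syngeR,
    deriv_const_div_add _ _ _ hx]
  field_simp

end Derivatives

theorem robin_hadamard_first_recursion_4d_general (κ : ℝ) (x' : Pt 2) :
    (∀ x : Pt 2, 0 < x.2.2 + x'.2.2 →
      (box (fun _ : Pt 2 => (1 : ℝ)) x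
        + 2 * contr (syngeR x') (fun y : Pt 2 => -2 * κ / (y.2.2 + x'.2.2)) x
        + 2 * (-2 * κ / (x.2.2 + x'.2.2)) = 0 ∧
      contr (syngeR x') (fun y : Pt 2 => -2 * κ / (y.2.2 + x'.2.2)) x
        = -(-2 * κ / (x.2.2 + x'.2.2)))) ∧
    (0 < x'.2.2 → ∀ (t : ℝ) (yy : Fin 2 → ℝ),
      (pdz (fun _ : Pt 2 => (1 : ℝ) + 1) (t, yy, 0)
        + pdz (synge x') (t, yy, 0) * ((0 : ℝ) - (-2 * κ / ((0 : ℝ) + x'.2.2)))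
        = κ * ((1 : ℝ) + 1) ∧
      κ * ((1 : ℝ) + 1) = 2 * κ)) := by
  refine ⟨fun x hx => ?_, fun hz' _ _ => ?_⟩
  · have hv := contr_syngeR_const_div (-2 * κ) x' x hx.ne'
    refine ⟨?_, hv⟩
    rw [box_const, hv]
    ring
  · rw [pdz_const, pdz_synge]
    refine ⟨?_, by ring⟩
    field_simp
    ring

/-- First Robin–Hadamard recursion relation for the massless field in d = 4 (n = 2):
on {z + z′ > 0}, u′_0 = 1 and v′_0 = −2κ/(z+z′) satisfy
□u′_0 + 2σ₋^μ∂_μv′_0 + 2v′_0 = 0 (equivalently σ₋^μ∂_μv′_0 = −v′_0); moreover, with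
u_0 = 1 and v_0 = 0, at z = 0 (for z′ > 0) the boundary condition
∂_z(u_0 + u′_0)|_{z=0} + (∂_zσ)|_{z=0}(v_0 − v′_0)|_{z=0} = κ(u_0 + u′_0)|_{z=0}
holds, both sides equaling 2κ. -/
theorem robin_hadamard_first_recursion_4d (κ : ℝ) (hκ : 0 < κ) (x' : Pt 2) :
    (∀ x : Pt 2, 0 < x.2.2 + x'.2.2 →
      (box (fun _ : Pt 2 => (1 : ℝ)) x
        + 2 * contr (syngeR x') (fun y : Pt 2 => -2 * κ / (y.2.2 + x'.2.2)) x
        + 2 * (-2 * κ / (x.2.2 + x'.2.2)) = 0 ∧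
      contr (syngeR x') (fun y : Pt 2 => -2 * κ / (y.2.2 + x'.2.2)) x
        = -(-2 * κ / (x.2.2 + x'.2.2)))) ∧
    (0 < x'.2.2 → ∀ (t : ℝ) (yy : Fin 2 → ℝ),
      (pdz (fun _ : Pt 2 => (1 : ℝ) + 1) (t, yy, 0)
        + pdz (synge x') (t, yy, 0) * ((0 : ℝ) - (-2 * κ / ((0 : ℝ) + x'.2.2)))
        = κ * ((1 : ℝ) + 1) ∧
      κ * ((1 : ℝ) + 1) = 2 * κ)) :=
  robin_hadamard_first_recursion_4d_general κ x'

end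
end
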